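/- Let 𝔠 be a filtered Floer-Novikov complex over a Noetherian ring R. Then for every homology class a ∈ H_*(𝔠) there exists a cycle α ∈ C_*(𝔠) with [α] = a and ℓ(α) = ρ(a), i.e., the infimum defining the spectral number is attained. -/

import Mathlib

/-!
Suppose the infimum `ρ` of the levels of the representatives of `[c₀]` is not attained. A
representative `x` of level `t` is then homologous to a chain below `t`, so the coefficients of
`x` on the level set `{𝒜 = t}`, read as a vector over `R[K]` with `K = ker ω`, lie in the
`R[K]`-module of such leading coefficients of boundaries. Since `K` is a finitely generated
abelian group, `R[K]` is Noetherian, so finitely many primitives suffice: `x` can be pushed below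
`t` by the boundary of a chain of height at most `t + β` whose boundary lives at level `t` or
below `t - δ`, and translating by `Γ` makes `δ > 0` and `β` independent of `t`.

Iterating gives representatives whose levels strictly decrease. If the levels tend to `-∞`, the
primitives sum to a chain bounding `c₀`, so `ρ = ℓ(0) = -∞` is attained. Otherwise the gap `δ`
confines the top points of all late representatives to the finitely many points above `ρ` of one
fixed chain, although they have pairwise distinct levels.
-/

noncomputable section

open Filter

variable {R : Type*} [CommRing R] {Γ : Type*} [CommGroup Γ] {P : Type*} [MulAction Γ P]

/-- The chain condition for the downward-completed Floer complex: for every `C`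
only finitely many points with nonzero coefficient have action greater than `C`. -/
def IsFloerChain (act : P → ℝ) (c : P → R) : Prop :=
  ∀ C : ℝ, {p : P | c p ≠ 0 ∧ C < act p}.Finite

/-- The boundary operator determined by the incidence numbers `bnd`:
`(∂c)(q) = Σ_p c(p) · n(p,q)` (a finite sum on Floer chains). -/
def floerBdry (bnd : P → P → R) (c : P → R) : P → R :=
  fun q => ∑ᶠ p : P, c p * bnd p q

/-- The filtration level `ℓ(c) = max {𝒜(p) : c_p ≠ 0}` (with `ℓ(0) = -∞`). -/
def floerLevel (act : P → ℝ) (c : P → R) : EReal :=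
  ⨆ p ∈ {p : P | c p ≠ 0}, (act p : EReal)

/-- A filtered Floer–Novikov complex over `R`: a principal `Γ`-bundle `P → S`
with `S` finite (encoded as a free `Γ`-action on `P` with finitely many orbits),
an action functional and period homomorphism satisfying
`𝒜(g·p) = 𝒜(p) − ω(g)`, and incidence numbers `n(p,q)` which strictly decrease
the action, are `Γ`-invariant, and define a boundary operator on the completed
complex squaring to zero. -/
structure FloerComplex (R : Type*) [CommRing R] (Γ : Type*) [CommGroup Γ]
    (P : Type*) [MulAction Γ P] where
  /-- the `Γ`-action on the total space `P` is free -/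
  free : ∀ (g : Γ) (p : P), g • p = p → g = 1
  /-- the base `S = P/Γ` is a finite set -/
  finiteOrbits : Finite (MulAction.orbitRel.Quotient Γ P)
  /-- the action functional `𝒜 : P → ℝ` -/
  act : P → ℝ
  /-- the period homomorphism `ω : Γ → ℝ` -/
  per : Γ → ℝ
  per_hom : ∀ g h : Γ, per (g * h) = per g + per h
  act_smul : ∀ (g : Γ) (p : P), act (g • p) = act p - per g
  /-- the incidence numbers `n : P × P → R` -/
  bnd : P → P → R
  bnd_vanish : ∀ p q : P, bnd p q ≠ 0 → act q < act p
  bnd_equivariant : ∀ (g : Γ) (p q : P), bnd (g • p) (g • q) = bnd p q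
  bnd_chain : ∀ p : P, ∀ C : ℝ, {q : P | bnd p q ≠ 0 ∧ C < act q}.Finite
  bdry_isChain : ∀ c : P → R, IsFloerChain act c → IsFloerChain act (floerBdry bnd c)
  bdry_bdry : ∀ c : P → R, IsFloerChain act c → floerBdry bnd (floerBdry bnd c) = 0

/-- The set of filtration levels of the representatives of the homology class
of the cycle `c₀`; its infimum is the spectral number `ρ([c₀])`. -/
def repLevels (𝔠 : FloerComplex R Γ P) (c₀ : P → R) : Set EReal :=
  {x : EReal | ∃ c : P → R, IsFloerChain 𝔠.act c ∧ floerBdry 𝔠.bnd c = 0 ∧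
    (∃ h : P → R, IsFloerChain 𝔠.act h ∧ floerBdry 𝔠.bnd h = c - c₀) ∧
    x = floerLevel 𝔠.act c}

open Function Set

theorem CommGroup.fg_subgroup {G : Type*} [CommGroup G] [Group.FG G] (H : Subgroup G) :
    Group.FG H := by
  rw [Group.fg_iff_subgroup_fg, Subgroup.fg_iff_add_fg]
  have : Module.Finite ℤ (Additive G) := Module.Finite.iff_addGroup_fg.mpr inferInstance
  have : IsNoetherian ℤ (Additive G) := isNoetherian_of_isNoetherianRing_of_finite ℤ _
  simpa using (Submodule.fg_iff_addSubgroup_fg _).1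
    (IsNoetherian.noetherian (AddSubgroup.toIntSubmodule H.toAddSubgroup))

theorem MulAction.exists_smul_eq_of_mk_eq {G X : Type*} [Group G] [MulAction G X] {p q : X}
    (h : (Quotient.mk'' p : MulAction.orbitRel.Quotient G X) = Quotient.mk'' q) :
    ∃ g : G, g • q = p :=
  MulAction.mem_orbit_iff.1 (MulAction.orbitRel_apply.1 (Quotient.exact' h))

/-! ### Chains and levels -/

section Chains

variable {act : P → ℝ} {c d : P → R}

theorem isFloerChain_zero (act : P → ℝ) : IsFloerChain act (0 : P → R) := by
  intro C
  simp

theorem IsFloerChain.add (hc : IsFloerChain act c) (hd : IsFloerChain act d) :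
    IsFloerChain act (c + d) := fun C =>
  ((hc C).union (hd C)).subset fun p ⟨hp, hC⟩ => by
    by_cases hcp : c p = 0
    · exact Or.inr ⟨by simpa [hcp] using hp, hC⟩
    · exact Or.inl ⟨hcp, hC⟩

theorem IsFloerChain.smul (r : R) (hc : IsFloerChain act c) : IsFloerChain act (r • c) :=
  fun C => (hc C).subset fun p ⟨hp, hC⟩ => ⟨fun h => hp (by simp [h]), hC⟩

theorem IsFloerChain.sub (hc : IsFloerChain act c) (hd : IsFloerChain act d) :
    IsFloerChain act (c - d) := by
  simpa [sub_eq_add_neg] using hc.add (hd.smul (-1))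

theorem IsFloerChain.finset_sum {ι : Type*} {s : Finset ι} {f : ι → P → R}
    (hf : ∀ i ∈ s, IsFloerChain act (f i)) : IsFloerChain act (∑ i ∈ s, f i) :=
  Finset.sum_induction f (IsFloerChain act) (fun _ _ => IsFloerChain.add)
    (isFloerChain_zero act) hf

theorem IsFloerChain.bddAbove (hc : IsFloerChain act c) : BddAbove (act '' support c) := by
  obtain ⟨M, hM⟩ := ((hc 0).image act).bddAbove
  refine ⟨max M 0, ?_⟩
  rintro _ ⟨p, hp, rfl⟩
  by_cases hpos : 0 < act p
  · exact le_max_of_le_left (hM ⟨p, ⟨hp, hpos⟩, rfl⟩)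
  · exact le_max_of_le_right (not_lt.1 hpos)

theorem IsFloerChain.exists_gap (hc : IsFloerChain act c) (a : ℝ) :
    ∃ δ > 0, ∀ p ∈ support c, act p < a → act p ≤ a - δ := by
  set T := insert (a - 1) (act '' {p | c p ≠ 0 ∧ a - 1 < act p ∧ act p < a})
  have hT : T.Finite :=
    (((hc (a - 1)).subset fun p hp => ⟨hp.1, hp.2.1⟩).image act).insert _
  obtain ⟨m, hmT, hm⟩ := Set.exists_max_image T id hT (Set.insert_nonempty _ _)
  simp only [id] at hm
  have hma : m < a := by
    rcases hmT with rfl | ⟨p, hp, rfl⟩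
    · linarith
    · exact hp.2.2
  refine ⟨a - m, by linarith, fun p hp hpa => ?_⟩
  by_cases h : a - 1 < act p
  · linarith [hm _ (Set.mem_insert_of_mem _ ⟨p, ⟨hp, h, hpa⟩, rfl⟩)]
  · linarith [hm _ (Set.mem_insert _ _)]

theorem floerLevel_le_coe_iff {t : ℝ} :
    floerLevel act c ≤ t ↔ support c ⊆ {p | act p ≤ t} := by
  simp [floerLevel, Set.subset_def]

theorem le_floerLevel {p : P} (hp : c p ≠ 0) : (act p : EReal) ≤ floerLevel act c :=
  le_iSup₂ (f := fun p _ => (act p : EReal)) p hp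

theorem floerLevel_zero : floerLevel act (0 : P → R) = ⊥ := by
  simp [floerLevel]

theorem IsFloerChain.exists_floerLevel_eq (hc : IsFloerChain act c) (hne : c ≠ 0) :
    ∃ p, c p ≠ 0 ∧ floerLevel act c = act p := by
  obtain ⟨p₀, hp₀⟩ := Function.ne_iff.1 hne
  obtain ⟨p, hp, hmax⟩ := Set.exists_max_image _ act (hc (act p₀ - 1))
    ⟨p₀, hp₀, by linarith⟩
  refine ⟨p, hp.1, le_antisymm (floerLevel_le_coe_iff.2 fun q hq => ?_) (le_floerLevel hp.1)⟩
  change act q ≤ act p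
  by_cases hq' : act p₀ - 1 < act q
  · exact hmax q ⟨hq, hq'⟩
  · linarith [hp.2, not_lt.1 hq']

theorem IsFloerChain.floerLevel_lt_coe_iff (hc : IsFloerChain act c) {t : ℝ} :
    floerLevel act c < t ↔ support c ⊆ {p | act p < t} := by
  refine ⟨fun h p hp => EReal.coe_lt_coe_iff.1 ((le_floerLevel hp).trans_lt h), fun h => ?_⟩
  obtain rfl | hne := eq_or_ne c 0
  · simp [floerLevel_zero]
  · obtain ⟨p, hp, hlev⟩ := hc.exists_floerLevel_eq hne
    rw [hlev]
    exact EReal.coe_lt_coe_iff.2 (h hp)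

theorem floerBdry_zero (bnd : P → P → R) : floerBdry bnd (0 : P → R) = 0 := by
  funext q
  simp [floerBdry]

end Chains

namespace FloerComplex

variable (𝔠 : FloerComplex R Γ P)

/-! ### The boundary and the `Γ`-action -/

section Boundary

variable {c d : P → R}

theorem hasFiniteSupport_mul_bnd (hc : IsFloerChain 𝔠.act c) (q : P) :
    (fun p => c p * 𝔠.bnd p q).HasFiniteSupport :=
  (hc (𝔠.act q)).subset fun _ hp =>
    ⟨left_ne_zero_of_mul hp, 𝔠.bnd_vanish _ q (right_ne_zero_of_mul hp)⟩

theorem floerBdry_add (hc : IsFloerChain 𝔠.act c) (hd : IsFloerChain 𝔠.act d) :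
    floerBdry 𝔠.bnd (c + d) = floerBdry 𝔠.bnd c + floerBdry 𝔠.bnd d := by
  funext q
  simp only [floerBdry, Pi.add_apply, add_mul]
  exact finsum_add_distrib (𝔠.hasFiniteSupport_mul_bnd hc q) (𝔠.hasFiniteSupport_mul_bnd hd q)

theorem floerBdry_sub (hc : IsFloerChain 𝔠.act c) (hd : IsFloerChain 𝔠.act d) :
    floerBdry 𝔠.bnd (c - d) = floerBdry 𝔠.bnd c - floerBdry 𝔠.bnd d := by
  funext q
  simp only [floerBdry, Pi.sub_apply, sub_mul]
  exact finsum_sub_distrib (𝔠.hasFiniteSupport_mul_bnd hc q) (𝔠.hasFiniteSupport_mul_bnd hd q)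

theorem floerBdry_smul (r : R) (hc : IsFloerChain 𝔠.act c) :
    floerBdry 𝔠.bnd (r • c) = r • floerBdry 𝔠.bnd c := by
  funext q
  simp only [floerBdry, Pi.smul_apply, smul_eq_mul, mul_assoc]
  exact (mul_finsum' _ r (𝔠.hasFiniteSupport_mul_bnd hc q)).symm

theorem floerBdry_finset_sum {ι : Type*} (s : Finset ι) {f : ι → P → R}
    (hf : ∀ i ∈ s, IsFloerChain 𝔠.act (f i)) :
    floerBdry 𝔠.bnd (∑ i ∈ s, f i) = ∑ i ∈ s, floerBdry 𝔠.bnd (f i) := by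
  classical
  induction s using Finset.induction_on with
  | empty => simp [floerBdry_zero]
  | insert i s hi ih =>
    rw [Finset.forall_mem_insert] at hf
    rw [Finset.sum_insert hi, Finset.sum_insert hi,
      𝔠.floerBdry_add hf.1 (IsFloerChain.finset_sum hf.2), ih hf.2]

theorem exists_act_lt_of_floerBdry_ne_zero {q : P} (hq : floerBdry 𝔠.bnd c q ≠ 0) :
    ∃ p, c p ≠ 0 ∧ 𝔠.act q < 𝔠.act p := by
  obtain ⟨p, hp⟩ : ∃ p, c p * 𝔠.bnd p q ≠ 0 := by
    by_contra! h
    exact hq (finsum_eq_zero_of_forall_eq_zero h)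
  exact ⟨p, left_ne_zero_of_mul hp, 𝔠.bnd_vanish p q (right_ne_zero_of_mul hp)⟩

theorem per_one : 𝔠.per 1 = 0 := by
  simpa using 𝔠.per_hom 1 1

theorem per_inv (g : Γ) : 𝔠.per g⁻¹ = -𝔠.per g := by
  have := 𝔠.per_hom g g⁻¹
  rw [mul_inv_cancel, per_one] at this
  linarith

theorem act_inv_smul (g : Γ) (p : P) : 𝔠.act (g⁻¹ • p) = 𝔠.act p + 𝔠.per g := by
  rw [𝔠.act_smul, 𝔠.per_inv, sub_neg_eq_add]

theorem smul_left_injective (𝔠 : FloerComplex R Γ P) (p : P) : Injective fun g : Γ => g • p := 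
    fun g h (hgh : g • p = h • p) => by
  have := 𝔠.free (h⁻¹ * g) p (by rw [mul_smul, hgh, inv_smul_smul])
  rwa [inv_mul_eq_one, eq_comm] at this

def translate (g : Γ) (c : P → R) : P → R := fun p => c (g⁻¹ • p)

theorem isFloerChain_translate (g : Γ) (hc : IsFloerChain 𝔠.act c) :
    IsFloerChain 𝔠.act (translate g c) := fun C =>
  ((hc (C + 𝔠.per g)).image (g • ·)).subset fun p ⟨hp, hC⟩ =>
    ⟨g⁻¹ • p, ⟨hp, by rw [𝔠.act_inv_smul]; linarith⟩, smul_inv_smul g p⟩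

theorem floerBdry_translate (g : Γ) (c : P → R) :
    floerBdry 𝔠.bnd (translate g c) = translate g (floerBdry 𝔠.bnd c) := by
  funext q
  rw [floerBdry, translate, floerBdry, ← finsum_comp_equiv (MulAction.toPerm g)]
  refine finsum_congr fun p => ?_
  simp only [MulAction.toPerm_apply, translate, inv_smul_smul]
  rw [← 𝔠.bnd_equivariant g⁻¹, inv_smul_smul]

end Boundary

/-! ### Leading coefficients over `R[ker ω]` -/

section LeadingCoeffs

variable {c d : P → R}

def perKer : Subgroup Γ where
  carrier := {g | 𝔠.per g = 0}
  mul_mem' {g h} (hg : 𝔠.per g = 0) (hh : 𝔠.per h = 0) :=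
    show 𝔠.per (g * h) = 0 by rw [𝔠.per_hom, hg, hh, add_zero]
  one_mem' := 𝔠.per_one
  inv_mem' {g} (hg : 𝔠.per g = 0) := show 𝔠.per g⁻¹ = 0 by rw [𝔠.per_inv, hg, neg_zero]

theorem act_perKer_smul (k : 𝔠.perKer) (p : P) : 𝔠.act ((k : Γ) • p) = 𝔠.act p := by
  rw [𝔠.act_smul, show 𝔠.per k = 0 from k.2, sub_zero]

theorem exists_perKer_smul_eq {p q : P}
    (horb : (Quotient.mk'' p : MulAction.orbitRel.Quotient Γ P) = Quotient.mk'' q)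
    (hact : 𝔠.act p = 𝔠.act q) : ∃ k : 𝔠.perKer, (k : Γ) • q = p := by
  obtain ⟨g, rfl⟩ := MulAction.exists_smul_eq_of_mk_eq horb
  refine ⟨⟨g, ?_⟩, rfl⟩
  rw [𝔠.act_smul] at hact
  show 𝔠.per g = 0
  linarith

def MeetsLevel (a : ℝ) (j : MulAction.orbitRel.Quotient Γ P) : Prop :=
  ∃ p, Quotient.mk'' p = j ∧ 𝔠.act p = a

open scoped Classical in
def levelBasepoint (a : ℝ) (j : MulAction.orbitRel.Quotient Γ P) : P :=
  if h : 𝔠.MeetsLevel a j then h.choose else j.out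

theorem levelBasepoint_spec {a : ℝ} {j : MulAction.orbitRel.Quotient Γ P}
    (hj : 𝔠.MeetsLevel a j) :
    Quotient.mk'' (𝔠.levelBasepoint a j) = j ∧ 𝔠.act (𝔠.levelBasepoint a j) = a := by
  rw [levelBasepoint, dif_pos hj]
  exact hj.choose_spec

theorem exists_eq_perKer_smul_levelBasepoint (p : P) :
    𝔠.MeetsLevel (𝔠.act p) (Quotient.mk'' p) ∧
      ∃ k : 𝔠.perKer, p = (k : Γ) • 𝔠.levelBasepoint (𝔠.act p) (Quotient.mk'' p) := by
  have hmeets : 𝔠.MeetsLevel (𝔠.act p) (Quotient.mk'' p) := ⟨p, rfl, rfl⟩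
  obtain ⟨horb, hact⟩ := 𝔠.levelBasepoint_spec hmeets
  obtain ⟨k, hk⟩ := 𝔠.exists_perKer_smul_eq horb.symm hact.symm
  exact ⟨hmeets, k, hk.symm⟩

def kerSMul (α : MonoidAlgebra R 𝔠.perKer) (c : P → R) : P → R :=
  fun p => α.coeff.sum fun k r => r * c ((k : Γ)⁻¹ • p)

theorem kerSMul_eq_sum (α : MonoidAlgebra R 𝔠.perKer) (c : P → R) :
    𝔠.kerSMul α c = ∑ k ∈ α.coeff.support, α.coeff k • translate (k : Γ) c := by
  funext p
  simp [kerSMul, Finsupp.sum, translate]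

theorem isFloerChain_kerSMul (α : MonoidAlgebra R 𝔠.perKer) (hc : IsFloerChain 𝔠.act c) :
    IsFloerChain 𝔠.act (𝔠.kerSMul α c) := by
  rw [kerSMul_eq_sum]
  exact IsFloerChain.finset_sum fun k _ => (𝔠.isFloerChain_translate _ hc).smul _

theorem floerBdry_kerSMul (α : MonoidAlgebra R 𝔠.perKer) (hc : IsFloerChain 𝔠.act c) :
    floerBdry 𝔠.bnd (𝔠.kerSMul α c) = 𝔠.kerSMul α (floerBdry 𝔠.bnd c) := by
  rw [kerSMul_eq_sum, kerSMul_eq_sum,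
    𝔠.floerBdry_finset_sum _ fun k _ => (𝔠.isFloerChain_translate _ hc).smul _]
  refine Finset.sum_congr rfl fun k _ => ?_
  rw [𝔠.floerBdry_smul _ (𝔠.isFloerChain_translate _ hc), floerBdry_translate]

theorem exists_act_eq_of_kerSMul_ne_zero {α : MonoidAlgebra R 𝔠.perKer} {p : P}
    (hp : 𝔠.kerSMul α c p ≠ 0) : ∃ q, c q ≠ 0 ∧ 𝔠.act q = 𝔠.act p := by
  obtain ⟨k, -, hk⟩ := Finset.exists_ne_zero_of_sum_ne_zero hp
  exact ⟨_, right_ne_zero_of_mul hk, by rw [𝔠.act_inv_smul, show 𝔠.per k = 0 from k.2.out,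
    add_zero]⟩

theorem finite_support_perKer_smul (hc : IsFloerChain 𝔠.act c) (b : P) :
    (support fun k : 𝔠.perKer => c ((k : Γ) • b)).Finite := by
  refine Set.Finite.of_finite_image ?_
    (((𝔠.smul_left_injective b).comp Subtype.val_injective).injOn)
  refine (hc (𝔠.act b - 1)).subset ?_
  rintro _ ⟨k, hk, rfl⟩
  exact ⟨hk, by rw [comp_apply, 𝔠.act_perKer_smul]; linarith⟩

open scoped Classical in
/-- The coefficients of `c` on the level set `{𝒜 = a}`: on an orbit `j` meeting it, its points
at level `a` are exactly the `K`-translates of the basepoint, so they form an element of `R[K]`. -/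
def leadingCoeffs (a : ℝ) (c : P → R) (j : MulAction.orbitRel.Quotient Γ P) :
    MonoidAlgebra R 𝔠.perKer :=
  if h : 𝔠.MeetsLevel a j ∧
      (support fun k : 𝔠.perKer => c ((k : Γ) • 𝔠.levelBasepoint a j)).Finite then
    .ofCoeff (Finsupp.ofSupportFinite _ h.2)
  else 0

variable {𝔠} {a : ℝ} {j : MulAction.orbitRel.Quotient Γ P}

theorem coeff_leadingCoeffs (hc : IsFloerChain 𝔠.act c) (hj : 𝔠.MeetsLevel a j)
    (k : 𝔠.perKer) : (𝔠.leadingCoeffs a c j).coeff k = c ((k : Γ) • 𝔠.levelBasepoint a j) := by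
  rw [leadingCoeffs, dif_pos ⟨hj, 𝔠.finite_support_perKer_smul hc _⟩]
  rfl

theorem leadingCoeffs_of_not_meetsLevel (hj : ¬𝔠.MeetsLevel a j) :
    𝔠.leadingCoeffs a c j = 0 :=
  dif_neg fun h => hj h.1

theorem leadingCoeffs_zero : 𝔠.leadingCoeffs a (0 : P → R) = 0 := by
  funext j
  by_cases hj : 𝔠.MeetsLevel a j
  · ext k
    rw [coeff_leadingCoeffs (isFloerChain_zero _) hj]
    rfl
  · exact leadingCoeffs_of_not_meetsLevel hj

theorem leadingCoeffs_add (hc : IsFloerChain 𝔠.act c) (hd : IsFloerChain 𝔠.act d) :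
    𝔠.leadingCoeffs a (c + d) = 𝔠.leadingCoeffs a c + 𝔠.leadingCoeffs a d := by
  funext j
  by_cases hj : 𝔠.MeetsLevel a j
  · ext k
    simp only [Pi.add_apply, MonoidAlgebra.coeff_add, Finsupp.add_apply,
      coeff_leadingCoeffs (hc.add hd) hj, coeff_leadingCoeffs hc hj, coeff_leadingCoeffs hd hj]
  · simp [leadingCoeffs_of_not_meetsLevel hj]

theorem leadingCoeffs_kerSMul (α : MonoidAlgebra R 𝔠.perKer) (hc : IsFloerChain 𝔠.act c) :
    𝔠.leadingCoeffs a (𝔠.kerSMul α c) = α • 𝔠.leadingCoeffs a c := by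
  funext j
  by_cases hj : 𝔠.MeetsLevel a j
  · ext k
    rw [coeff_leadingCoeffs (𝔠.isFloerChain_kerSMul α hc) hj, Pi.smul_apply, smul_eq_mul,
      MonoidAlgebra.coeff_mul_apply_left, kerSMul]
    refine Finsupp.sum_congr fun u _ => ?_
    rw [coeff_leadingCoeffs hc hj, Subgroup.coe_mul, Subgroup.coe_inv, mul_smul]
  · simp [leadingCoeffs_of_not_meetsLevel hj]

theorem leadingCoeffs_congr (hc : IsFloerChain 𝔠.act c) (hd : IsFloerChain 𝔠.act d)
    (h : ∀ p, 𝔠.act p = a → c p = d p) : 𝔠.leadingCoeffs a c = 𝔠.leadingCoeffs a d := by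
  funext j
  by_cases hj : 𝔠.MeetsLevel a j
  · ext k
    rw [coeff_leadingCoeffs hc hj, coeff_leadingCoeffs hd hj]
    exact h _ (by rw [𝔠.act_perKer_smul, (𝔠.levelBasepoint_spec hj).2])
  · simp [leadingCoeffs_of_not_meetsLevel hj]

theorem apply_eq_of_leadingCoeffs_eq (hc : IsFloerChain 𝔠.act c) (hd : IsFloerChain 𝔠.act d)
    {p : P} (h : 𝔠.leadingCoeffs (𝔠.act p) c = 𝔠.leadingCoeffs (𝔠.act p) d) : c p = d p := by
  obtain ⟨hj, k, hk⟩ := 𝔠.exists_eq_perKer_smul_levelBasepoint p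
  rw [hk, ← coeff_leadingCoeffs hc hj, ← coeff_leadingCoeffs hd hj, h]

end LeadingCoeffs

/-! ### Gapped chains and the Noetherian reduction -/

section Reduction

def IsGappedChain (a δ β : ℝ) (h : P → R) : Prop :=
  IsFloerChain 𝔠.act h ∧ support h ⊆ {p | 𝔠.act p ≤ a + β} ∧
    support (floerBdry 𝔠.bnd h) ⊆ {p | 𝔠.act p = a ∨ 𝔠.act p ≤ a - δ}

variable {𝔠} {a δ β δ' β' : ℝ} {h h' : P → R}

theorem isGappedChain_zero : 𝔠.IsGappedChain a δ β 0 :=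
  ⟨isFloerChain_zero _, by simp, by simp [floerBdry_zero]⟩

theorem IsGappedChain.add (hh : 𝔠.IsGappedChain a δ β h) (hh' : 𝔠.IsGappedChain a δ β h') :
    𝔠.IsGappedChain a δ β (h + h') := by
  refine ⟨hh.1.add hh'.1, (support_add h h').trans (union_subset hh.2.1 hh'.2.1), ?_⟩
  rw [𝔠.floerBdry_add hh.1 hh'.1]
  exact (support_add _ _).trans (union_subset hh.2.2 hh'.2.2)

theorem IsGappedChain.kerSMul (α : MonoidAlgebra R 𝔠.perKer) (hh : 𝔠.IsGappedChain a δ β h) :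
    𝔠.IsGappedChain a δ β (𝔠.kerSMul α h) := by
  refine ⟨𝔠.isFloerChain_kerSMul α hh.1, fun p hp => ?_, fun p hp => ?_⟩
  · obtain ⟨q, hq, hqp⟩ := 𝔠.exists_act_eq_of_kerSMul_ne_zero hp
    show 𝔠.act p ≤ a + β
    exact hqp ▸ hh.2.1 hq
  · rw [𝔠.floerBdry_kerSMul α hh.1] at hp
    obtain ⟨q, hq, hqp⟩ := 𝔠.exists_act_eq_of_kerSMul_ne_zero hp
    show 𝔠.act p = a ∨ 𝔠.act p ≤ a - δ
    exact hqp ▸ hh.2.2 hq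

theorem IsGappedChain.mono (hh : 𝔠.IsGappedChain a δ β h) (hδ : δ' ≤ δ) (hβ : β ≤ β') :
    𝔠.IsGappedChain a δ' β' h := by
  refine ⟨hh.1, fun p hp => ?_, fun p hp => ?_⟩
  · have : 𝔠.act p ≤ a + β := hh.2.1 hp
    exact (by linarith : 𝔠.act p ≤ a + β')
  · rcases hh.2.2 hp with hpa | hpa
    · exact Or.inl hpa
    · exact Or.inr (by linarith : 𝔠.act p ≤ a - δ')

theorem IsGappedChain.support_floerBdry_subset (hh : 𝔠.IsGappedChain a δ β h) (hδ : 0 ≤ δ) :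
    support (floerBdry 𝔠.bnd h) ⊆ {p | 𝔠.act p ≤ a} := fun p hp => by
  rcases hh.2.2 hp with hpa | hpa
  · exact hpa.le
  · exact (by linarith : 𝔠.act p ≤ a)

theorem IsGappedChain.translate (hh : 𝔠.IsGappedChain a δ β h) (g : Γ) :
    𝔠.IsGappedChain (a - 𝔠.per g) δ β (translate g h) := by
  refine ⟨𝔠.isFloerChain_translate g hh.1, fun p hp => ?_, fun p hp => ?_⟩
  · have : 𝔠.act (g⁻¹ • p) ≤ a + β := hh.2.1 hp
    rw [𝔠.act_inv_smul] at this
    exact (by linarith : 𝔠.act p ≤ a - 𝔠.per g + β)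
  · rw [𝔠.floerBdry_translate] at hp
    have : 𝔠.act (g⁻¹ • p) = a ∨ 𝔠.act (g⁻¹ • p) ≤ a - δ := hh.2.2 hp
    rw [𝔠.act_inv_smul] at this
    exact this.imp (by intro; linarith) (by intro; linarith)

theorem exists_isGappedChain (hh : IsFloerChain 𝔠.act h)
    (ha : support (floerBdry 𝔠.bnd h) ⊆ {p | 𝔠.act p ≤ a}) :
    ∃ n : ℕ, 𝔠.IsGappedChain a (1 / (n + 1)) n h := by
  obtain ⟨δ, hδ, hgap⟩ := (𝔠.bdry_isChain h hh).exists_gap a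
  obtain ⟨M, hM⟩ := hh.bddAbove
  obtain ⟨n₁, hn₁⟩ := exists_nat_one_div_lt hδ
  obtain ⟨n₂, hn₂⟩ := exists_nat_ge (M - a)
  have hgapped : 𝔠.IsGappedChain a δ (M - a) h := by
    refine ⟨hh, fun p hp => ?_, fun p hp => ?_⟩
    · exact (by linarith [hM (mem_image_of_mem _ hp)] : 𝔠.act p ≤ a + (M - a))
    · exact (ha hp).eq_or_lt.imp id (hgap p hp)
  refine ⟨max n₁ n₂, hgapped.mono ?_ ?_⟩
  · exact (Nat.one_div_le_one_div (le_max_left n₁ n₂)).trans hn₁.le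
  · exact hn₂.trans (Nat.cast_le.2 (le_max_right n₁ n₂))

variable (𝔠) in
def gappedLeading (a δ β : ℝ) :
    Submodule (MonoidAlgebra R 𝔠.perKer)
      (MulAction.orbitRel.Quotient Γ P → MonoidAlgebra R 𝔠.perKer) where
  carrier := {v | ∃ h, 𝔠.IsGappedChain a δ β h ∧ 𝔠.leadingCoeffs a (floerBdry 𝔠.bnd h) = v}
  zero_mem' := ⟨0, isGappedChain_zero, by rw [floerBdry_zero, leadingCoeffs_zero]⟩
  add_mem' := by
    rintro _ _ ⟨h, hh, rfl⟩ ⟨h', hh', rfl⟩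
    refine ⟨h + h', hh.add hh', ?_⟩
    rw [𝔠.floerBdry_add hh.1 hh'.1,
      leadingCoeffs_add (𝔠.bdry_isChain _ hh.1) (𝔠.bdry_isChain _ hh'.1)]
  smul_mem' := by
    rintro α _ ⟨h, hh, rfl⟩
    refine ⟨𝔠.kerSMul α h, hh.kerSMul α, ?_⟩
    rw [𝔠.floerBdry_kerSMul α hh.1, leadingCoeffs_kerSMul α (𝔠.bdry_isChain _ hh.1)]

theorem gappedLeading_mono (hδ : δ' ≤ δ) (hβ : β ≤ β') :
    𝔠.gappedLeading a δ β ≤ 𝔠.gappedLeading a δ' β' := by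
  rintro _ ⟨h, hh, rfl⟩
  exact ⟨h, hh.mono hδ hβ, rfl⟩

variable (𝔠) in
def IsReducibleAt (a δ β : ℝ) : Prop :=
  ∀ y, IsFloerChain 𝔠.act y → support y ⊆ {p | 𝔠.act p ≤ a} →
    (∃ w, IsFloerChain 𝔠.act w ∧ support (y - floerBdry 𝔠.bnd w) ⊆ {p | 𝔠.act p < a}) →
    ∃ h, 𝔠.IsGappedChain a δ β h ∧ support (y - floerBdry 𝔠.bnd h) ⊆ {p | 𝔠.act p < a}

theorem IsReducibleAt.mono (hred : 𝔠.IsReducibleAt a δ β) (hδ : δ' ≤ δ) (hβ : β ≤ β') :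
    𝔠.IsReducibleAt a δ' β' := fun y hy hya hw => by
  obtain ⟨h, hh, hyh⟩ := hred y hy hya hw
  exact ⟨h, hh.mono hδ hβ, hyh⟩

theorem IsReducibleAt.translate (hred : 𝔠.IsReducibleAt a δ β) (g : Γ) :
    𝔠.IsReducibleAt (a - 𝔠.per g) δ β := by
  rintro y hy hya ⟨w, hw, hyw⟩
  obtain ⟨h, hh, hyh⟩ := hred (FloerComplex.translate g⁻¹ y) (𝔠.isFloerChain_translate _ hy)
    (fun p hp => by
      have : 𝔠.act (g⁻¹⁻¹ • p) ≤ a - 𝔠.per g := hya hp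
      rw [inv_inv, 𝔠.act_smul] at this
      exact (by linarith : 𝔠.act p ≤ a))
    ⟨FloerComplex.translate g⁻¹ w, 𝔠.isFloerChain_translate _ hw, fun p hp => by
      rw [𝔠.floerBdry_translate] at hp
      have : 𝔠.act (g⁻¹⁻¹ • p) < a - 𝔠.per g := hyw hp
      rw [inv_inv, 𝔠.act_smul] at this
      exact (by linarith : 𝔠.act p < a)⟩
  refine ⟨FloerComplex.translate g h, hh.translate g, fun p hp => ?_⟩
  rw [𝔠.floerBdry_translate] at hp
  have : 𝔠.act (g⁻¹ • p) < a := hyh (by simpa [FloerComplex.translate] using hp)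
  rw [𝔠.act_inv_smul] at this
  exact (by linarith : 𝔠.act p < a - 𝔠.per g)

theorem support_sub_subset_of_leadingCoeffs_eq {c d : P → R} (hc : IsFloerChain 𝔠.act c)
    (hd : IsFloerChain 𝔠.act d) (hca : support c ⊆ {p | 𝔠.act p ≤ a})
    (hda : support d ⊆ {p | 𝔠.act p ≤ a}) (h : 𝔠.leadingCoeffs a c = 𝔠.leadingCoeffs a d) :
    support (c - d) ⊆ {p | 𝔠.act p < a} := fun p hp => by
  have hle : 𝔠.act p ≤ a := ((support_sub c d).trans (union_subset hca hda)) hp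
  refine hle.lt_of_ne fun hpa => hp ?_
  rw [Pi.sub_apply, sub_eq_zero]
  exact apply_eq_of_leadingCoeffs_eq hc hd (hpa ▸ h)

variable (𝔠) in
/-- The Noetherian step: the gapped leading-coefficient modules at level `a` form an increasing
chain exhausting the leading coefficients of all boundaries supported at levels `≤ a`, so it
stabilizes, and the constants at which it does so work for every chain. -/
theorem exists_nat_isReducibleAt [Group.FG Γ] [IsNoetherianRing R] (a : ℝ) :
    ∃ N : ℕ, 𝔠.IsReducibleAt a (1 / (N + 1)) N := by
  have := 𝔠.finiteOrbits
  have : Group.FG 𝔠.perKer := CommGroup.fg_subgroup _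
  have : IsNoetherianRing (MonoidAlgebra R 𝔠.perKer) := Algebra.FiniteType.isNoetherianRing R _
  let G : ℕ →o Submodule (MonoidAlgebra R 𝔠.perKer)
      (MulAction.orbitRel.Quotient Γ P → MonoidAlgebra R 𝔠.perKer) :=
    ⟨fun n => 𝔠.gappedLeading a (1 / (n + 1)) n, fun m n hmn =>
      gappedLeading_mono (Nat.one_div_le_one_div hmn) (Nat.cast_le.2 hmn)⟩
  obtain ⟨N, hN⟩ := monotone_stabilizes_iff_noetherian.2 inferInstance G
  refine ⟨N, fun y hy hya ⟨w, hw, hyw⟩ => ?_⟩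
  have hbw := 𝔠.bdry_isChain w hw
  have hwa : support (floerBdry 𝔠.bnd w) ⊆ {p | 𝔠.act p ≤ a} := by
    rw [show floerBdry 𝔠.bnd w = y - (y - floerBdry 𝔠.bnd w) by abel]
    exact (support_sub _ _).trans (union_subset hya (hyw.trans fun p (hp : 𝔠.act p < a) => hp.le))
  obtain ⟨n, hn⟩ := exists_isGappedChain hw hwa
  obtain ⟨h, hh, hhw⟩ : 𝔠.leadingCoeffs a (floerBdry 𝔠.bnd w) ∈ G N :=
    (le_total n N).elim (G.monotone ·) (fun hNn => (hN n hNn).ge) ⟨w, hn, rfl⟩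
  have hyw' : 𝔠.leadingCoeffs a y = 𝔠.leadingCoeffs a (floerBdry 𝔠.bnd w) :=
    leadingCoeffs_congr hy hbw fun p hpa => by
      by_contra hne
      exact (hyw (sub_ne_zero.2 hne)).ne hpa
  refine ⟨h, hh, support_sub_subset_of_leadingCoeffs_eq hy (𝔠.bdry_isChain _ hh.1) hya
    (hh.support_floerBdry_subset (by positivity)) (hyw'.trans hhw.symm)⟩

variable (𝔠) in
theorem exists_isReducibleAt [Group.FG Γ] [IsNoetherianRing R] :
    ∃ δ > 0, ∃ β, ∀ p : P, 𝔠.IsReducibleAt (𝔠.act p) δ β := by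
  have := 𝔠.finiteOrbits
  choose N hN using fun j : MulAction.orbitRel.Quotient Γ P =>
    𝔠.exists_nat_isReducibleAt (𝔠.act j.out)
  obtain ⟨M, hM⟩ := Finite.exists_le N
  refine ⟨1 / (M + 1), by positivity, M, fun p => ?_⟩
  obtain ⟨g, hg⟩ := MulAction.exists_smul_eq_of_mk_eq (Quotient.out_eq' (Quotient.mk'' p :
    MulAction.orbitRel.Quotient Γ P)).symm
  rw [← hg, 𝔠.act_smul]
  exact ((hN _).mono (Nat.one_div_le_one_div (hM _)) (Nat.cast_le.2 (hM _))).translate g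

end Reduction

/-! ### Descent -/

section Series

variable {𝔠} {f : ℕ → P → R}

theorem isFloerChain_finsum (hf : ∀ n, IsFloerChain 𝔠.act (f n))
    (hev : ∀ C, ∃ N, ∀ n ≥ N, support (f n) ⊆ {p | 𝔠.act p ≤ C}) :
    IsFloerChain 𝔠.act fun p => ∑ᶠ n, f n p := fun C => by
  obtain ⟨N, hN⟩ := hev C
  refine ((Finset.range N).finite_toSet.biUnion fun n _ => hf n C).subset ?_
  rintro p ⟨hp, hC⟩
  obtain ⟨n, hn⟩ : ∃ n, f n p ≠ 0 := by
    by_contra! h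
    exact hp (finsum_eq_zero_of_forall_eq_zero h)
  refine mem_biUnion (Finset.mem_coe.2 (Finset.mem_range.2 ?_)) ⟨hn, hC⟩
  by_contra! hNn
  exact (not_le.2 hC) (hN n hNn hn)

theorem floerBdry_finsum (hf : ∀ n, IsFloerChain 𝔠.act (f n))
    (hev : ∀ C, ∃ N, ∀ n ≥ N, support (f n) ⊆ {p | 𝔠.act p ≤ C}) (q : P) :
    floerBdry 𝔠.bnd (fun p => ∑ᶠ n, f n p) q = ∑ᶠ n, floerBdry 𝔠.bnd (f n) q := by
  obtain ⟨N, hN⟩ := hev (𝔠.act q)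
  have hsupp : ∀ p, 𝔠.act q < 𝔠.act p → (support fun n => f n p) ⊆ Finset.range N :=
    fun p hp n hn => Finset.mem_range.2 (by by_contra! h; exact (not_le.2 hp) (hN n h hn))
  have hpartial : floerBdry 𝔠.bnd (fun p => ∑ᶠ n, f n p) q =
      floerBdry 𝔠.bnd (∑ n ∈ Finset.range N, f n) q := by
    refine finsum_congr fun p => ?_
    by_cases hb : 𝔠.bnd p q = 0
    · rw [hb, mul_zero, mul_zero]
    · change (∑ᶠ n, f n p) * _ = _
      rw [finsum_eq_sum_of_support_subset _ (hsupp p (𝔠.bnd_vanish p q hb)), Finset.sum_apply]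
  rw [hpartial, 𝔠.floerBdry_finset_sum _ fun n _ => hf n, Finset.sum_apply,
    finsum_eq_sum_of_support_subset]
  intro n hn
  obtain ⟨p, hp, hqp⟩ := 𝔠.exists_act_lt_of_floerBdry_ne_zero hn
  exact hsupp p hqp hp

end Series

section Descent

def IsHomologous (c₀ x : P → R) : Prop :=
  IsFloerChain 𝔠.act x ∧ ∃ h, IsFloerChain 𝔠.act h ∧ floerBdry 𝔠.bnd h = x - c₀

variable {𝔠} {c₀ x : P → R}

theorem isHomologous_self (hchain : IsFloerChain 𝔠.act c₀) : 𝔠.IsHomologous c₀ c₀ :=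
  ⟨hchain, 0, isFloerChain_zero _, by rw [floerBdry_zero, sub_self]⟩

theorem IsHomologous.sub_floerBdry (hx : 𝔠.IsHomologous c₀ x) {k : P → R}
    (hk : IsFloerChain 𝔠.act k) : 𝔠.IsHomologous c₀ (x - floerBdry 𝔠.bnd k) := by
  obtain ⟨hx, h, hh, hhx⟩ := hx
  refine ⟨hx.sub (𝔠.bdry_isChain k hk), h - k, hh.sub hk, ?_⟩
  rw [𝔠.floerBdry_sub hh hk, hhx]
  abel

theorem IsHomologous.floerLevel_mem (hchain : IsFloerChain 𝔠.act c₀)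
    (hcycle : floerBdry 𝔠.bnd c₀ = 0) (hx : 𝔠.IsHomologous c₀ x) :
    floerLevel 𝔠.act x ∈ repLevels 𝔠 c₀ := by
  obtain ⟨hx, h, hh, hhx⟩ := hx
  refine ⟨x, hx, ?_, ⟨h, hh, hhx⟩, rfl⟩
  rw [show x = c₀ + floerBdry 𝔠.bnd h by rw [hhx]; abel,
    𝔠.floerBdry_add hchain (𝔠.bdry_isChain h hh), hcycle, 𝔠.bdry_bdry h hh, add_zero]

theorem IsHomologous.exists_sub_floerBdry_eq (hx : 𝔠.IsHomologous c₀ x)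
    {y : P → R} (hy : 𝔠.IsHomologous c₀ y) :
    ∃ w, IsFloerChain 𝔠.act w ∧ x - floerBdry 𝔠.bnd w = y := by
  obtain ⟨-, h, hh, hhx⟩ := hx
  obtain ⟨-, h', hh', hhy⟩ := hy
  refine ⟨h - h', hh.sub hh', ?_⟩
  rw [𝔠.floerBdry_sub hh hh', hhx, hhy]
  abel

theorem IsHomologous.exists_descent {δ β : ℝ} (hred : ∀ p, 𝔠.IsReducibleAt (𝔠.act p) δ β)
    (hchain : IsFloerChain 𝔠.act c₀) (hcycle : floerBdry 𝔠.bnd c₀ = 0)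
    (hnot : sInf (repLevels 𝔠 c₀) ∉ repLevels 𝔠 c₀) (hx : 𝔠.IsHomologous c₀ x) :
    ∃ p k, x p ≠ 0 ∧ 𝔠.IsGappedChain (𝔠.act p) δ β k ∧
      support (x - floerBdry 𝔠.bnd k) ⊆ {q | 𝔠.act q < 𝔠.act p} := by
  have hmem := hx.floerLevel_mem hchain hcycle
  have hlt : sInf (repLevels 𝔠 c₀) < floerLevel 𝔠.act x :=
    (sInf_le hmem).lt_of_ne fun h => hnot (h ▸ hmem)
  have hne : x ≠ 0 := by
    rintro rfl
    simp [floerLevel_zero] at hlt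
  obtain ⟨p, hp, hlev⟩ := hx.1.exists_floerLevel_eq hne
  obtain ⟨_, ⟨c, hc, -, hcx, rfl⟩, hcp⟩ := sInf_lt_iff.1 (hlev ▸ hlt)
  obtain ⟨w, hw, hxw⟩ := hx.exists_sub_floerBdry_eq ⟨hc, hcx⟩
  obtain ⟨k, hk, hxk⟩ := hred p x hx.1 (floerLevel_le_coe_iff.1 hlev.le)
    ⟨w, hw, hxw ▸ hc.floerLevel_lt_coe_iff.1 hcp⟩
  exact ⟨p, k, hp, hk, hxk⟩

variable (𝔠 c₀) in
structure DescentSeq (δ β : ℝ) where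
  x : ℕ → P → R
  top : ℕ → P
  k : ℕ → P → R
  x_zero : x 0 = c₀
  x_succ : ∀ n, x (n + 1) = x n - floerBdry 𝔠.bnd (k n)
  x_top_ne_zero : ∀ n, x n (top n) ≠ 0
  isGappedChain : ∀ n, 𝔠.IsGappedChain (𝔠.act (top n)) δ β (k n)
  support_x_succ : ∀ n, support (x (n + 1)) ⊆ {p | 𝔠.act p < 𝔠.act (top n)}

theorem exists_descentSeq {δ β : ℝ} (hred : ∀ p, 𝔠.IsReducibleAt (𝔠.act p) δ β)
    (hchain : IsFloerChain 𝔠.act c₀) (hcycle : floerBdry 𝔠.bnd c₀ = 0)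
    (hnot : sInf (repLevels 𝔠 c₀) ∉ repLevels 𝔠 c₀) : Nonempty (𝔠.DescentSeq c₀ δ β) := by
  choose top k htop hk hsupp using fun x : {x // 𝔠.IsHomologous c₀ x} =>
    x.2.exists_descent hred hchain hcycle hnot
  let next (x : {x // 𝔠.IsHomologous c₀ x}) : {x // 𝔠.IsHomologous c₀ x} :=
    ⟨x.1 - floerBdry 𝔠.bnd (k x), x.2.sub_floerBdry (hk x).1⟩
  let seq (n : ℕ) := next^[n] ⟨c₀, isHomologous_self hchain⟩
  have hseq (n : ℕ) : seq (n + 1) = next (seq n) := iterate_succ_apply' next n _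
  exact ⟨{
    x := fun n => (seq n).1
    top := fun n => top (seq n)
    k := fun n => k (seq n)
    x_zero := rfl
    x_succ := fun n => by rw [hseq]
    x_top_ne_zero := fun n => htop (seq n)
    isGappedChain := fun n => hk (seq n)
    support_x_succ := fun n => by rw [hseq]; exact hsupp (seq n) }⟩

namespace DescentSeq

variable {δ β : ℝ} (s : 𝔠.DescentSeq c₀ δ β)

theorem isFloerChain_x (hchain : IsFloerChain 𝔠.act c₀) (n : ℕ) : IsFloerChain 𝔠.act (s.x n) := by
  induction n with
  | zero => rw [s.x_zero]; exact hchain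
  | succ n ih => rw [s.x_succ]; exact ih.sub (𝔠.bdry_isChain _ (s.isGappedChain n).1)

theorem x_eq (n : ℕ) : s.x n = c₀ - ∑ i ∈ Finset.range n, floerBdry 𝔠.bnd (s.k i) := by
  induction n with
  | zero => simp [s.x_zero]
  | succ n ih => rw [s.x_succ, ih, Finset.sum_range_succ, sub_sub]

theorem strictAnti : StrictAnti fun n => 𝔠.act (s.top n) :=
  strictAnti_nat_of_succ_lt fun n => s.support_x_succ n (s.x_top_ne_zero (n + 1))

theorem exists_floerBdry_eq_of_not_bddBelow (hδ : 0 ≤ δ)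
    (hunb : ¬BddBelow (range fun n => 𝔠.act (s.top n))) :
    ∃ H, IsFloerChain 𝔠.act H ∧ floerBdry 𝔠.bnd H = c₀ := by
  have hbelow (C : ℝ) : ∃ n, 𝔠.act (s.top n) < C := by
    obtain ⟨_, ⟨n, rfl⟩, hn⟩ := not_bddBelow_iff.1 hunb C
    exact ⟨n, hn⟩
  have hk n := (s.isGappedChain n).1
  have hev (C : ℝ) : ∃ N, ∀ n ≥ N, support (s.k n) ⊆ {p | 𝔠.act p ≤ C} := by
    obtain ⟨N, hN⟩ := hbelow (C - β)
    refine ⟨N, fun n hn p hp => ?_⟩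
    have : 𝔠.act p ≤ 𝔠.act (s.top n) + β := (s.isGappedChain n).2.1 hp
    have := s.strictAnti.antitone hn
    exact (by linarith : 𝔠.act p ≤ C)
  refine ⟨fun p => ∑ᶠ n, s.k n p, isFloerChain_finsum hk hev, funext fun q => ?_⟩
  rw [floerBdry_finsum hk hev]
  obtain ⟨n, hn⟩ := hbelow (𝔠.act q)
  have hxq : s.x (n + 1) q = 0 := by
    by_contra h
    exact lt_asymm hn (s.support_x_succ n h)
  rw [finsum_eq_sum_of_support_subset (s := Finset.range (n + 1))]
  · have := congrFun (s.x_eq (n + 1)) q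
    rw [hxq, Pi.sub_apply, Finset.sum_apply] at this
    exact (sub_eq_zero.1 this.symm).symm
  · intro i hi
    refine Finset.mem_range.2 (Nat.lt_succ_of_le (not_lt.1 fun hni => ?_))
    have : 𝔠.act q ≤ 𝔠.act (s.top i) := (s.isGappedChain i).support_floerBdry_subset hδ hi
    linarith [s.strictAnti hni]

theorem not_bddBelow (hδ : 0 < δ) (hchain : IsFloerChain 𝔠.act c₀) :
    ¬BddBelow (range fun n => 𝔠.act (s.top n)) := by
  intro hbdd
  set ρ := ⨅ n, 𝔠.act (s.top n)
  have hρ (n : ℕ) : ρ < 𝔠.act (s.top n) :=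
    (ciInf_le hbdd (n + 1)).trans_lt (s.strictAnti n.lt_succ_self)
  obtain ⟨n₀, hn₀⟩ : ∃ n₀, 𝔠.act (s.top n₀) < ρ + δ := exists_lt_of_ciInf_lt (by linarith)
  have hstay (m : ℕ) (p : P) (hρp : ρ < 𝔠.act p) (hp : s.x (n₀ + m) p ≠ 0) : s.x n₀ p ≠ 0 := by
    induction m with
    | zero => exact hp
    | succ m ih =>
      have hlt : 𝔠.act p < 𝔠.act (s.top (n₀ + m)) := s.support_x_succ _ hp
      have hkp : floerBdry 𝔠.bnd (s.k (n₀ + m)) p = 0 := by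
        by_contra hne
        rcases (s.isGappedChain _).2.2 hne with h | h
        · exact hlt.ne h
        · linarith [s.strictAnti.antitone (Nat.le_add_right n₀ m)]
      have hx := congrFun (s.x_succ (n₀ + m)) p
      rw [Pi.sub_apply, hkp, sub_zero] at hx
      exact ih fun h0 => hp (hx.trans h0)
  have hmem (m : ℕ) : s.top (n₀ + m) ∈ {p | s.x n₀ p ≠ 0 ∧ ρ < 𝔠.act p} :=
    ⟨hstay m _ (hρ _) (s.x_top_ne_zero _), hρ _⟩
  refine Set.infinite_of_injective_forall_mem (fun m m' h => ?_) hmem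
    ((s.isFloerChain_x hchain n₀) ρ)
  have := s.strictAnti.injective (congrArg 𝔠.act h)
  omega

end DescentSeq

variable (𝔠) in
theorem sInf_repLevels_mem [Group.FG Γ] [IsNoetherianRing R] (hchain : IsFloerChain 𝔠.act c₀)
    (hcycle : floerBdry 𝔠.bnd c₀ = 0) : sInf (repLevels 𝔠 c₀) ∈ repLevels 𝔠 c₀ := by
  by_contra hnot
  obtain ⟨δ, hδ, β, hred⟩ := 𝔠.exists_isReducibleAt
  obtain ⟨s⟩ := exists_descentSeq hred hchain hcycle hnot
  obtain ⟨H, hH, hHc₀⟩ :=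
    s.exists_floerBdry_eq_of_not_bddBelow hδ.le (s.not_bddBelow hδ hchain)
  have hzero : 𝔠.IsHomologous c₀ 0 := ⟨isFloerChain_zero _, 0 - H,
    (isFloerChain_zero _).sub hH, by rw [𝔠.floerBdry_sub (isFloerChain_zero _) hH, hHc₀,
      floerBdry_zero]⟩
  have hbot := hzero.floerLevel_mem hchain hcycle
  rw [floerLevel_zero] at hbot
  exact hnot (by rwa [le_bot_iff.1 (sInf_le hbot)])

end Descent

end FloerComplex

/-- over a Noetherian ring, every homology class `a = [c₀]` has a
representing cycle `α` with `ℓ(α) = ρ(a)`: the infimum defining the spectral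
number is attained. -/
theorem spectral_number_attained [Group.FG Γ] [IsNoetherianRing R]
    (𝔠 : FloerComplex R Γ P) (c₀ : P → R)
    (hchain : IsFloerChain 𝔠.act c₀) (hcycle : floerBdry 𝔠.bnd c₀ = 0) :
    ∃ α : P → R, IsFloerChain 𝔠.act α ∧ floerBdry 𝔠.bnd α = 0 ∧
      (∃ h : P → R, IsFloerChain 𝔠.act h ∧ floerBdry 𝔠.bnd h = α - c₀) ∧
      floerLevel 𝔠.act α = sInf (repLevels 𝔠 c₀) := by
  obtain ⟨α, hα, hcyc, hhom, hlev⟩ := 𝔠.sInf_repLevels_mem hchain hcycle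
  exact ⟨α, hα, hcyc, hhom, hlev.symm⟩
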